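/- Let n ≥ 8 and let G be a connected locally nonforesty graph of order n whose size is minimum among all connected locally nonforesty graphs of order n. Then every block of G of order at least 3 is itself a locally nonforesty graph. -/

import Mathlib

/-- A graph `G` is locally nonforesty if for every vertex `v`, the subgraph induced by
the neighborhood of `v` contains a cycle (i.e., is not acyclic). -/
def LocallyNonforesty {V : Type*} (G : SimpleGraph V) : Prop :=
  ∀ v : V, ¬ (G.induce (G.neighborSet v)).IsAcyclic

/-- A vertex set `B` induces a block of `G`: the induced subgraph `G[B]` is connected,
has no cut vertex, and `B` is maximal with these properties.  (A block of a graph is a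
maximal connected subgraph without a cut vertex; such a subgraph is always induced.) -/
def IsBlock {V : Type*} (G : SimpleGraph V) (B : Set V) : Prop :=
  (G.induce B).Connected ∧
    (∀ v ∈ B, (G.induce (B \ {v})).Preconnected) ∧
    ∀ C : Set V, B ⊆ C → (G.induce C).Connected →
      (∀ v ∈ C, (G.induce (C \ {v})).Preconnected) → C = B

namespace Stmt15

open SimpleGraph

variable {V : Type*} {G : SimpleGraph V}

/-- Every vertex of `W` has two distinct neighbors in `W`. -/
def MD2 (G : SimpleGraph V) (W : Set V) : Prop :=
  W.Nonempty ∧ ∀ u ∈ W, ∃ x ∈ W, ∃ y ∈ W, x ≠ y ∧ G.Adj u x ∧ G.Adj u y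

/-- There is a "min-degree ≥ 2" set inside `s`. -/
def GoodIn (G : SimpleGraph V) (s : Set V) : Prop := ∃ W, W ⊆ s ∧ MD2 G W

lemma GoodIn.mono {s t : Set V} (h : GoodIn G s) (hst : s ⊆ t) : GoodIn G t := by
  obtain ⟨W, hW, hW2⟩ := h
  exact ⟨W, hW.trans hst, hW2⟩

/-- Decompose a cycle based at `v` as `v — x — … — y — v`. -/
lemma cycle_decomp {v : V} (c : G.Walk v v) (hc : c.IsCycle) :
    ∃ (x y : V) (r : G.Walk x y), r.IsPath ∧ G.Adj v x ∧ G.Adj y v ∧ v ∉ r.support ∧ x ≠ y ∧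
      (∀ z ∈ r.support, z ∈ c.support) ∧ (∀ e ∈ r.edges, e ∈ c.edges) := by
  cases c with
  | nil => exact absurd rfl hc.ne_nil
  | @cons _ x _ h q =>
    cases q using SimpleGraph.Walk.concatRec with
    | Hnil => exact absurd h (G.loopless.irrefl v)
    | @Hconcat _ y _ r h2 _ =>
      rw [Walk.isCycle_def] at hc
      obtain ⟨htrail, -, hnd⟩ := hc
      have hsupp : (Walk.cons h (r.concat h2)).support = v :: (r.support ++ [v]) := by
        simp [Walk.support_concat]
      have hedges : (Walk.cons h (r.concat h2)).edges = s(v, x) :: (r.edges ++ [s(y, v)]) := by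
        simp [Walk.edges_concat]
      have hnd' : (r.support ++ [v]).Nodup := by
        simpa [Walk.support_concat] using hnd
      have hvr : v ∉ r.support := by
        intro hv
        rcases List.nodup_append'.mp hnd' with ⟨-, -, hdisj⟩
        exact hdisj hv (List.mem_singleton_self v)
      have hrnodup : r.support.Nodup := (List.nodup_append'.mp hnd').1
      have hxy : x ≠ y := by
        intro hxyeq
        have hne := htrail.edges_nodup
        rw [hedges] at hne
        have : s(v, x) ∈ r.edges ++ [s(y, v)] := by
          subst hxyeq
          simp [Sym2.eq_swap]
        exact (List.nodup_cons.mp hne).1 this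
      refine ⟨x, y, r, (Walk.isPath_def r).mpr hrnodup, h, h2, hvr, hxy, ?_, ?_⟩
      · intro z hz; rw [hsupp]; simp [hz]
      · intro e he; rw [hedges]; simp [he]

/-- Every vertex on a cycle has two distinct neighbors on the cycle. -/
lemma cycle_md2 [DecidableEq V] {v : V} (c : G.Walk v v) (hc : c.IsCycle) :
    MD2 G {z | z ∈ c.support} := by
  refine ⟨⟨v, c.start_mem_support⟩, ?_⟩
  intro u hu
  have hc' := hc.rotate hu
  obtain ⟨x, y, r, -, hvx, hyv, -, hxy, hsupp, -⟩ := cycle_decomp (c.rotate _ hu) hc'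
  have hsub : ∀ z ∈ (c.rotate _ hu).support, z ∈ c.support := by
    intro z hz
    rw [Walk.support_eq_cons, List.mem_cons] at hz
    rcases hz with hz | hz
    · subst hz; exact hu
    · have := (Walk.support_rotate c _ hu).mem_iff.mp hz
      exact List.mem_of_mem_tail this
  exact ⟨x, hsub x (hsupp x r.start_mem_support), y, hsub y (hsupp y r.end_mem_support),
    hxy, hvx, hyv.symm⟩

/-- In a path, an edge containing the first vertex is the first edge. -/
lemma edge_head {a b c : V} (p : G.Walk a b) (hp : p.IsPath) (h : s(c, a) ∈ p.edges) :
    c = p.getVert 1 := by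
  cases p with
  | nil => simp at h
  | @cons _ d _ h' q =>
    rw [Walk.edges_cons, List.mem_cons] at h
    rcases h with h | h
    · rw [Sym2.eq_iff] at h
      rcases h with ⟨h1, h2⟩ | ⟨h1, h2⟩
      · exact absurd h2 h'.ne
      · simpa [Walk.getVert_cons_succ] using h1
    · have : a ∈ q.support := Walk.snd_mem_support_of_mem_edges q h
      rw [Walk.cons_isPath_iff] at hp
      exact absurd this hp.2

/-- A set in which every vertex has two distinct neighbors contains a cycle. -/
lemma exists_cycle_of_md2 [Finite V] {W : Set V} (h : MD2 G W) :
    ∃ (a : V) (c : G.Walk a a), c.IsCycle := by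
  classical
  cases nonempty_fintype V
  obtain ⟨⟨w0, hw0⟩, h2⟩ := h
  set P : ℕ → Prop := fun n =>
    ∃ (a b : V) (p : G.Walk a b), p.IsPath ∧ (∀ x ∈ p.support, x ∈ W) ∧ p.length = n with hP
  have hbound : ∀ n, P n → n + 1 ≤ Fintype.card V := by
    rintro n ⟨a, b, p, hp, -, hlen⟩
    have := hp.support_nodup.length_le_card
    rwa [Walk.length_support, hlen] at this
  have hP1 : P 1 := by
    obtain ⟨x, hx, y, hy, hxy, hax, hay⟩ := h2 w0 hw0
    refine ⟨w0, x, Walk.cons hax Walk.nil, ?_, ?_, rfl⟩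
    · simp [hax.ne]
    · intro z hz; simp at hz
      rcases hz with hz | hz <;> subst hz <;> assumption
  set N := Nat.findGreatest P (Fintype.card V) with hN
  have hPN : P N := Nat.findGreatest_spec (m := 1) (by have := hbound 1 hP1; omega) hP1
  obtain ⟨a, b, p, hp, hpW, hplen⟩ := hPN
  have haW : a ∈ W := hpW a p.start_mem_support
  obtain ⟨x, hx, y, hy, hxy, hax, hay⟩ := h2 a haW
  have hN1 : 1 ≤ N := Nat.le_findGreatest (by have := hbound 1 hP1; omega) hP1
  -- choose z adjacent to a, z ∈ W, z ≠ p.getVert 1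
  obtain ⟨z, hzW, haz, hzsnd⟩ : ∃ z, z ∈ W ∧ G.Adj a z ∧ z ≠ p.getVert 1 := by
    by_cases hxs : x = p.getVert 1
    · exact ⟨y, hy, hay, fun hh => hxy (hxs.trans hh.symm)⟩
    · exact ⟨x, hx, hax, hxs⟩
  by_cases hzs : z ∈ p.support
  · -- make a cycle
    have hza : z ≠ a := fun hh => G.loopless.irrefl a (hh ▸ haz)
    have hq : (p.takeUntil z hzs).IsPath := hp.takeUntil hzs
    refine ⟨z, Walk.cons haz.symm (p.takeUntil z hzs), ?_⟩
    rw [Walk.cons_isCycle_iff]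
    refine ⟨hq, fun hmem => ?_⟩
    have : z = (p.takeUntil z hzs).getVert 1 := edge_head _ hq hmem
    -- prefix has the same second vertex
    have htake : (p.takeUntil z hzs).getVert 1 = p.getVert 1 := by
      cases p with
      | nil =>
        simp at hzs; exact absurd hzs hza
      | @cons _ d _ h' q =>
        by_cases had : a = z
        · exact absurd had.symm hza
        · simp only [Walk.takeUntil]
          rw [dif_neg had]
          simp [Walk.getVert_cons_succ]
    exact hzsnd (this.trans htake)
  · -- extend the path, contradiction with maximality
    exfalso
    have hp' : (Walk.cons haz.symm p).IsPath := hp.cons hzs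
    have hPN1 : P (N + 1) := by
      refine ⟨z, b, Walk.cons haz.symm p, hp', ?_, by simp [hplen]⟩
      intro w hw
      rw [Walk.support_cons, List.mem_cons] at hw
      rcases hw with hw | hw
      · subst hw; exact hzW
      · exact hpW w hw
    have hle : N + 1 ≤ Fintype.card V := by
      have := hbound (N + 1) hPN1
      omega
    exact Nat.findGreatest_is_greatest (lt_add_one N) hle hPN1

/-- The inclusion homomorphism from an induced subgraph. -/
def indHom (G : SimpleGraph V) (s : Set V) : G.induce s →g G :=
  ⟨Subtype.val, fun {a b} h => h⟩

lemma goodIn_of_not_acyclic' {s : Set V} (h : ¬(G.induce s).IsAcyclic) : GoodIn G s := by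
  classical
  unfold SimpleGraph.IsAcyclic at h
  push_neg at h
  obtain ⟨a, c, hc⟩ := h
  have hc' : (c.map (indHom G s)).IsCycle := hc.map Subtype.val_injective
  refine ⟨{z | z ∈ (c.map (indHom G s)).support}, ?_, cycle_md2 _ hc'⟩
  intro z hz
  simp only [Set.mem_setOf_eq, Walk.support_map, List.mem_map] at hz
  obtain ⟨w, -, rfl⟩ := hz
  exact w.2

lemma not_acyclic_of_goodIn [Finite V] {s : Set V} (h : GoodIn G s) :
    ¬(G.induce s).IsAcyclic := by
  obtain ⟨W, hWs, ⟨⟨w0, hw0⟩, h2⟩⟩ := h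
  intro hacyc
  have hmd : MD2 (G.induce s) {z : ↥s | ↑z ∈ W} := by
    refine ⟨⟨⟨w0, hWs hw0⟩, hw0⟩, ?_⟩
    rintro ⟨u, hus⟩ hu
    obtain ⟨x, hx, y, hy, hxy, hux, huy⟩ := h2 u hu
    refine ⟨⟨x, hWs hx⟩, hx, ⟨y, hWs hy⟩, hy, ?_, hux, huy⟩
    intro hh
    exact hxy (congrArg Subtype.val hh)
  obtain ⟨a, c, hc⟩ := exists_cycle_of_md2 hmd
  exact hacyc c hc

lemma goodIn_nbhd (h : ∀ v : V, ¬(G.induce (G.neighborSet v)).IsAcyclic) (v : V) :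
    GoodIn G {x | G.Adj v x} :=
  goodIn_of_not_acyclic' (h v)

lemma exists_cycle_nbhd (h : ∀ v : V, ¬(G.induce (G.neighborSet v)).IsAcyclic) (u : V) :
    ∃ (a : V) (c : G.Walk a a), c.IsCycle ∧ ∀ z ∈ c.support, G.Adj u z := by
  classical
  have hu := h u
  unfold SimpleGraph.IsAcyclic at hu
  push_neg at hu
  obtain ⟨a, c, hc⟩ := hu
  refine ⟨a, c.map (indHom G _), hc.map Subtype.val_injective, ?_⟩
  intro z hz
  erw [Walk.support_map, List.mem_map] at hz
  obtain ⟨w, -, rfl⟩ := hz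
  exact w.2

lemma reachable_induce_of_walk {s : Set V} : ∀ {a b : V} (p : G.Walk a b),
    (∀ x ∈ p.support, x ∈ s) → ∀ (ha : a ∈ s) (hb : b ∈ s),
    (G.induce s).Reachable ⟨a, ha⟩ ⟨b, hb⟩ := by
  intro a b p
  induction p with
  | nil => intro _ ha hb; exact Reachable.refl _
  | @cons u c w h' q ih =>
    intro h ha hb
    have hc : c ∈ s := h c (by simp)
    have h1 : (G.induce s).Adj ⟨u, ha⟩ ⟨c, hc⟩ := h'
    exact h1.reachable.trans (ih (fun x hx => h x (by simp [hx])) hc hb)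

/-- Monotonicity of induced subgraphs for reachability. -/
lemma reachable_induce_mono {s t : Set V} (hst : s ⊆ t) {x y : ↥s}
    (h : (G.induce s).Reachable x y) :
    (G.induce t).Reachable ⟨x.1, hst x.2⟩ ⟨y.1, hst y.2⟩ :=
  Reachable.map (⟨fun z => ⟨z.1, hst z.2⟩, fun {a b} hadj => hadj⟩ : G.induce s →g G.induce t) h

lemma exists_walk_of_induce_reachable {s : Set V} {x y : ↥s}
    (h : (G.induce s).Reachable x y) :
    ∃ p : G.Walk x.1 y.1, ∀ z ∈ p.support, z ∈ s := by
  obtain ⟨w⟩ := h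
  refine ⟨w.map (indHom G s), ?_⟩
  intro z hz
  erw [Walk.support_map, List.mem_map] at hz
  obtain ⟨w', -, rfl⟩ := hz
  exact w'.2

/-- Ingredient B: a neighbor of `v` connected to `B \ {v}` off `v` lies in `B`. -/
lemma mem_block_of_walk_avoiding {B : Set V} (hB : IsBlock G B) {v b₀ y : V}
    (hvB : v ∈ B) (hb₀B : b₀ ∈ B) (hb₀v : b₀ ≠ v)
    (hy : G.Adj v y) (p : G.Walk b₀ y) (hp : v ∉ p.support) : y ∈ B := by
  classical
  obtain ⟨hconnB, hdel, hmax⟩ := hB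
  set q : G.Walk b₀ y := (p.toPath : G.Walk b₀ y) with hqdef
  have hq : q.IsPath := p.toPath.2
  have hqsup : ∀ z ∈ q.support, z ∈ p.support := fun z hz => p.support_toPath_subset hz
  have hqv : v ∉ q.support := fun h => hp (hqsup _ h)
  set C : Set V := B ∪ {z | z ∈ q.support} with hC
  have hBC : B ⊆ C := Set.subset_union_left
  have hvC : v ∈ C := Or.inl hvB
  have hyC : y ∈ C := Or.inr q.end_mem_support
  have hb₀C : b₀ ∈ C := Or.inl hb₀B
  have hsubBw : ∀ w : V, B \ {w} ⊆ C \ {w} := fun w z hz => ⟨hBC hz.1, hz.2⟩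
  have reachB : ∀ (w a : V) (hwv : w ≠ v) (haB : a ∈ B) (haw : a ≠ w),
      (G.induce (C \ {w})).Reachable ⟨a, ⟨hBC haB, haw⟩⟩ ⟨v, ⟨hvC, Ne.symm hwv⟩⟩ := by
    intro w a hwv haB haw
    by_cases hwB : w ∈ B
    · have hr := hdel w hwB ⟨a, haB, haw⟩ ⟨v, hvB, Ne.symm hwv⟩
      exact reachable_induce_mono (hsubBw w) hr
    · have hsubB : B ⊆ C \ {w} :=
        fun z hz => ⟨hBC hz, fun hzw => hwB ((Set.mem_singleton_iff.mp hzw) ▸ hz)⟩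
      have hr := hconnB.preconnected ⟨a, haB⟩ ⟨v, hvB⟩
      exact reachable_induce_mono hsubB hr
  have key : ∀ w ∈ C, (G.induce (C \ {w})).Preconnected := by
    intro w hw
    by_cases hwv : w = v
    · subst hwv
      have hb₀' : b₀ ∈ C \ {w} := ⟨hb₀C, hb₀v⟩
      have hto : ∀ z : ↥(C \ {w}), (G.induce (C \ {w})).Reachable z ⟨b₀, hb₀'⟩ := by
        rintro ⟨z, hzC, hzv⟩
        rcases hzC with hzB | hzq
        · have hr := hdel w hvB ⟨z, hzB, hzv⟩ ⟨b₀, hb₀B, hb₀v⟩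
          exact reachable_induce_mono (hsubBw w) hr
        · have hsupport : ∀ x ∈ (q.takeUntil z hzq).support, x ∈ C \ {w} := by
            intro x hx
            have hxq := q.support_takeUntil_subset hzq hx
            exact ⟨Or.inr hxq, fun hxv => hqv ((Set.mem_singleton_iff.mp hxv) ▸ hxq)⟩
          exact (reachable_induce_of_walk (q.takeUntil z hzq) hsupport hb₀' ⟨Or.inr hzq, hzv⟩).symm
      intro x y
      exact (hto x).trans (hto y).symm
    · have hv' : v ∈ C \ {w} := ⟨hvC, Ne.symm hwv⟩
      have hto : ∀ z : ↥(C \ {w}), (G.induce (C \ {w})).Reachable z ⟨v, hv'⟩ := by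
        rintro ⟨z, hzC, hzw⟩
        by_cases hzB : z ∈ B
        · have hzw' : z ≠ w := fun h => hzw (Set.mem_singleton_iff.mpr h)
          exact reachB w z hwv hzB hzw'
        · have hzq : z ∈ q.support := hzC.resolve_left hzB
          by_cases hw2 : w ∈ (q.dropUntil z hzq).support
          · -- w is after z; use the initial segment to b₀
            have hwt1 : w ∉ (q.takeUntil z hzq).support := by
              have hnd : q.support.Nodup := hq.support_nodup
              rw [← q.take_spec hzq, Walk.support_append] at hnd
              have hdisj := (List.nodup_append'.mp hnd).2.2
              intro hwt
              have hw2' : w ∈ (q.dropUntil z hzq).support.tail := by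
                have hcons := Walk.support_eq_cons (q.dropUntil z hzq)
                rw [hcons, List.mem_cons] at hw2
                rcases hw2 with h | h
                · exact absurd (Set.mem_singleton_iff.mpr h.symm) hzw
                · exact h
              exact hdisj hwt hw2'
            have hb₀w : b₀ ≠ w := fun hh => hwt1 (hh ▸ (q.takeUntil z hzq).start_mem_support)
            have hsupport : ∀ x ∈ (q.takeUntil z hzq).support, x ∈ C \ {w} := by
              intro x hx
              exact ⟨Or.inr (q.support_takeUntil_subset hzq hx),
                fun hxw => hwt1 ((Set.mem_singleton_iff.mp hxw) ▸ hx)⟩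
            have hr1 := reachable_induce_of_walk (q.takeUntil z hzq) hsupport
              ⟨hb₀C, hb₀w⟩ ⟨hzC, hzw⟩
            exact hr1.symm.trans (reachB w b₀ hwv hb₀B hb₀w)
          · -- w is strictly before z; go forward to y then jump to v
            have hsupport : ∀ x ∈ (q.dropUntil z hzq).support, x ∈ C \ {w} := by
              intro x hx
              exact ⟨Or.inr (q.support_dropUntil_subset hzq hx),
                fun hxw => hw2 ((Set.mem_singleton_iff.mp hxw) ▸ hx)⟩
            have hyw : y ∈ C \ {w} := hsupport y (q.dropUntil z hzq).end_mem_support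
            have hr2 := reachable_induce_of_walk (q.dropUntil z hzq) hsupport ⟨hzC, hzw⟩ hyw
            have hadj : (G.induce (C \ {w})).Adj ⟨y, hyw⟩ ⟨v, hv'⟩ := hy.symm
            exact hr2.trans hadj.reachable
      intro x y
      exact (hto x).trans (hto y).symm
  have hCconn : (G.induce C).Connected := by
    haveI : Nonempty ↥C := ⟨⟨v, hvC⟩⟩
    refine ⟨?_⟩
    have hto : ∀ z : ↥C, (G.induce C).Reachable z ⟨v, hvC⟩ := by
      rintro ⟨z, hzC⟩
      rcases hzC' : hzC with hzB | hzq
      · exact reachable_induce_mono hBC (hconnB.preconnected ⟨z, hzB⟩ ⟨v, hvB⟩)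
      · have hsupport : ∀ x ∈ (q.takeUntil z hzq).support, x ∈ C :=
          fun x hx => Or.inr (q.support_takeUntil_subset hzq hx)
        have hr1 := reachable_induce_of_walk (q.takeUntil z hzq) hsupport hb₀C (Or.inr hzq)
        exact hr1.symm.trans (reachable_induce_mono hBC (hconnB.preconnected ⟨b₀, hb₀B⟩ ⟨v, hvB⟩))
    intro x y
    exact (hto x).trans (hto y).symm
  have hCB : C = B := hmax C hBC hCconn key
  exact hCB ▸ hyC

lemma MD2.transfer {W : Set V} {H : SimpleGraph V} (h : MD2 G W)
    (hadj : ∀ x ∈ W, ∀ y ∈ W, G.Adj x y → H.Adj x y) : MD2 H W := by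
  obtain ⟨hne, h2⟩ := h
  refine ⟨hne, ?_⟩
  intro u hu
  obtain ⟨x, hx, y, hy, hxy, hux, huy⟩ := h2 u hu
  exact ⟨x, hx, y, hy, hxy, hadj u hu x hx hux, hadj u hu y hy huy⟩

lemma goodIn_of_cycle_adj [DecidableEq V] {H : SimpleGraph V} {a u : V}
    (c : H.Walk a a) (hc : c.IsCycle)
    (h : ∀ z ∈ c.support, H.Adj u z) : GoodIn H {x | H.Adj u x} :=
  ⟨{z | z ∈ c.support}, h, cycle_md2 c hc⟩

lemma rotate_support_subset [DecidableEq V] {v u : V} (c : G.Walk v v) (hu : u ∈ c.support) :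
    ∀ z ∈ (c.rotate _ hu).support, z ∈ c.support := by
  intro z hz
  rw [Walk.support_eq_cons, List.mem_cons] at hz
  rcases hz with hz | hz
  · subst hz; exact hu
  · exact List.mem_of_mem_tail ((Walk.support_rotate c _ hu).mem_iff.mp hz)

lemma reach_along_walk {H : SimpleGraph V} {v : V} {R : Set V}
    (hR : ∀ x ∈ R, H.Reachable x v)
    (hkeep : ∀ x y, G.Adj x y → x ≠ v → x ∉ R → H.Adj x y) :
    ∀ {x b : V} (p : G.Walk x b), H.Reachable b v → H.Reachable x v := by
  intro x b p
  induction p with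
  | nil => exact id
  | @cons a c w h q ih =>
    intro hb
    by_cases hav : a = v
    · subst hav; exact Reachable.refl _
    by_cases haR : a ∈ R
    · exact hR a haR
    · exact ((hkeep a c h hav haR).reachable).trans (ih hb)

lemma surgery [Fintype V] {v u1 : V} {K S A : Set V}
    (hconn : G.Connected) (hloc : LocallyNonforesty G)
    (hKv : v ∉ K)
    (hKcl : ∀ x ∈ K, ∀ y, G.Adj x y → y ≠ v → y ∈ K)
    (hKconn : ∀ x ∈ K, ∀ y ∈ K, ∃ p : G.Walk x y, v ∉ p.support)
    (hS : S = {x | G.Adj v x ∧ x ∈ K})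
    (hu1S : u1 ∈ S)
    (hA : A ⊆ S) (hAu1 : u1 ∉ A) (hAadj : ∀ a ∈ A, ¬ G.Adj u1 a)
    (hu1good : GoodIn G {x | G.Adj u1 x ∧ x ≠ v})
    (hcov : ∀ u ∈ S, ¬GoodIn G {x | G.Adj u x ∧ x ≠ v} →
      ∀ s ∈ S, s ≠ u1 → (G.Adj u1 s ∨ s ∈ A))
    (hvW : ∃ W : Set V, (∀ x ∈ W, G.Adj v x) ∧ (∀ x ∈ W, x ∉ K) ∧ MD2 G W)
    (hforest : ∀ T, T ⊆ S → MD2 G T → False) :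
    ∃ H : SimpleGraph V, H.Connected ∧ LocallyNonforesty H ∧
      H.edgeSet.ncard + S.ncard ≤ G.edgeSet.ncard + A.ncard + 1 := by
  classical
  have hSK : S ⊆ K := fun x hx => (hS ▸ hx).2
  have hSadj : ∀ x ∈ S, G.Adj v x := fun x hx => (hS ▸ hx).1
  have hu1K : u1 ∈ K := hSK hu1S
  have hu1v : u1 ≠ v := fun h => hKv (h ▸ hu1K)
  have hSv : ∀ x ∈ S, x ≠ v := fun x hx => (hSadj x hx).ne'
  -- the modified graph
  set H : SimpleGraph V :=
    { Adj := fun x y => (G.Adj x y ∧ ¬((x = v ∧ y ∈ S) ∨ (y = v ∧ x ∈ S))) ∨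
        ((x = u1 ∧ y ∈ A) ∨ (y = u1 ∧ x ∈ A) ∨ (x = v ∧ y = u1) ∨ (x = u1 ∧ y = v)),
      symm := ⟨by
        rintro x y (⟨h1, h2⟩ | h)
        · exact Or.inl ⟨h1.symm, fun hh => h2 hh.symm⟩
        · exact Or.inr (by tauto)⟩
      loopless := ⟨by
        rintro x (⟨h1, -⟩ | (⟨hx, h⟩ | ⟨hx, h⟩ | ⟨hx, h⟩ | ⟨hx, h⟩))
        · exact G.loopless.irrefl x h1
        · exact hAu1 (hx ▸ h)
        · exact hAu1 (hx ▸ h)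
        · exact hu1v (by rw [← h, hx])
        · exact hu1v (by rw [← hx, h])⟩ } with hHdef
  have hKeep : ∀ {x y : V}, G.Adj x y → x ≠ v → y ≠ v → H.Adj x y := by
    intro x y h hx hy
    exact Or.inl ⟨h, by rintro (⟨rfl, -⟩ | ⟨rfl, -⟩) <;> simp_all⟩
  have hHvu1 : H.Adj v u1 := Or.inr (Or.inr (Or.inr (Or.inl ⟨rfl, rfl⟩)))
  have hHvx : ∀ {x}, G.Adj v x → x ∉ S → H.Adj v x := by
    intro x h hxS
    refine Or.inl ⟨h, ?_⟩
    rintro (⟨-, h2⟩ | ⟨hx, -⟩)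
    · exact hxS h2
    · exact G.loopless.irrefl v (hx ▸ h)
  have hedgesH : ∀ {a b : V} (p : G.Walk a b), v ∉ p.support →
      ∀ e ∈ p.edges, e ∈ H.edgeSet := by
    intro a b p hv e he
    induction e using Sym2.ind with
    | _ x y =>
      have hx := p.fst_mem_support_of_mem_edges he
      have hy := p.snd_mem_support_of_mem_edges he
      have hadj : G.Adj x y := p.adj_of_mem_edges he
      rw [SimpleGraph.mem_edgeSet]
      exact hKeep hadj (fun h => hv (h ▸ hx)) (fun h => hv (h ▸ hy))
  -- connectivity
  have reachKu1 : ∀ x ∈ K, H.Reachable x u1 := by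
    intro x hx
    obtain ⟨p, hp⟩ := hKconn x hx u1 hu1K
    exact ⟨p.transfer H (hedgesH p hp)⟩
  have reachv : ∀ x : V, H.Reachable x v := by
    intro x
    obtain ⟨p⟩ := hconn.preconnected x v
    refine reach_along_walk (R := S)
      (fun z hz => (reachKu1 z (hSK hz)).trans hHvu1.symm.reachable) ?_ p (Reachable.refl _)
    intro a b h hav haS
    refine Or.inl ⟨h, ?_⟩
    rintro (⟨h1, -⟩ | ⟨h1, h2⟩)
    · exact hav h1
    · exact haS h2
  have hHconn : H.Connected := by
    haveI : Nonempty V := hconn.nonempty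
    exact ⟨fun a b => (reachv a).trans (reachv b).symm⟩
  -- local nonforestyness
  have hlocH : LocallyNonforesty H := by
    intro u
    apply not_acyclic_of_goodIn (s := H.neighborSet u)
    by_cases huv : u = v
    · subst huv
      obtain ⟨W, hWadj, hWK, hmd⟩ := hvW
      refine ⟨W, ?_, ?_⟩
      · intro x hx
        exact hHvx (hWadj x hx) (fun hxS => hWK x hx (hSK hxS))
      · refine hmd.transfer ?_
        intro x hx y hy hxy
        exact hKeep hxy (hWadj x hx).ne' (hWadj y hy).ne'
    by_cases huK : u ∈ K
    · by_cases hug : GoodIn G {x | G.Adj u x ∧ x ≠ v}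
      · obtain ⟨W, hWs, hmd⟩ := hug
        refine ⟨W, ?_, ?_⟩
        · intro x hx
          exact hKeep (hWs hx).1 huv (hWs hx).2
        · exact hmd.transfer (fun x hx y hy hxy => hKeep hxy (hWs hx).2 (hWs hy).2)
      · -- u ∈ D : splice u1 in place of v
        obtain ⟨a, c, hc, hcadj⟩ := exists_cycle_nbhd hloc u
        by_cases hvc : v ∈ c.support
        case neg =>
          exact absurd ⟨{z | z ∈ c.support},
            fun z hz => ⟨hcadj z hz, fun h => hvc (h ▸ hz)⟩, cycle_md2 c hc⟩ hug
        have huS : u ∈ S := hS ▸ ⟨(hcadj v hvc).symm, huK⟩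
        have huu1 : u ≠ u1 := fun h => hug (h ▸ hu1good)
        have hu1Hadj : ∀ s, s ∈ S → s ≠ u1 → H.Adj u1 s := by
          intro s hsS hsu1
          rcases hcov u huS hug s hsS hsu1 with h | h
          · exact hKeep h hu1v (hSv s hsS)
          · exact Or.inr (Or.inl ⟨rfl, h⟩)
        have hc' := (hc.rotate hvc)
        obtain ⟨x, y, r, hr, hvx, hyv, hvr, hxy, hrsupp, hredge⟩ :=
          cycle_decomp (c.rotate _ hvc) hc'
        have hrsupp' : ∀ z ∈ r.support, z ∈ c.support :=
          fun z hz => rotate_support_subset c hvc z (hrsupp z hz)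
        have hradj : ∀ z ∈ r.support, G.Adj u z := fun z hz => hcadj z (hrsupp' z hz)
        have hxS : x ∈ S := hS ▸ ⟨hvx, hKcl u huK x (hradj x r.start_mem_support) hvx.ne'⟩
        have hyS : y ∈ S := hS ▸ ⟨hyv.symm, hKcl u huK y (hradj y r.end_mem_support) hyv.ne⟩
        have hHur : ∀ z ∈ r.support, H.Adj u z :=
          fun z hz => hKeep (hradj z hz) huv (fun h => hvr (h ▸ hz))
        have hHuu1 : H.Adj u u1 := (hu1Hadj u huS huu1).symm
        have htri : ∀ z, z ∈ S → G.Adj u1 z → G.Adj u z → G.Adj u u1 → False := by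
          intro z hzS h1z huz huu1'
          refine hforest {u, u1, z} ?_ ?_
          · intro w hw
            simp only [Set.mem_insert_iff, Set.mem_singleton_iff] at hw
            rcases hw with rfl | rfl | rfl
            · exact huS
            · exact hu1S
            · exact hzS
          · refine ⟨⟨u, by simp⟩, ?_⟩
            intro w hw
            simp only [Set.mem_insert_iff, Set.mem_singleton_iff] at hw
            rcases hw with rfl | rfl | rfl
            · exact ⟨u1, by simp, z, by simp, h1z.ne, huu1', huz⟩
            · exact ⟨u, by simp, z, by simp, huz.ne, huu1'.symm, h1z⟩
            · exact ⟨u, by simp, u1, by simp, fun h => huu1 h, huz.symm, h1z.symm⟩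
        have hredgeH : ∀ e ∈ r.edges, e ∈ H.edgeSet := hedgesH r hvr
        by_cases hu1r : u1 ∈ r.support
        · by_cases hxu1 : u1 = x
          · subst hxu1
            by_cases he : s(u1, y) ∈ r.edges
            · exact (htri y hyS (r.adj_of_mem_edges he) (hradj y r.end_mem_support)
                (hradj u1 r.start_mem_support)).elim
            · have hrHpath : (r.transfer H hredgeH).IsPath := by
                rw [Walk.isPath_def, Walk.support_transfer]
                exact hr.support_nodup
              have hH1 : H.Adj u1 y := hu1Hadj y hyS (Ne.symm hxy)
              have hcyc : (Walk.cons hH1 (r.transfer H hredgeH).reverse).IsCycle := by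
                rw [Walk.cons_isCycle_iff]
                refine ⟨hrHpath.reverse, ?_⟩
                rw [Walk.edges_reverse, List.mem_reverse, Walk.edges_transfer]
                exact he
              refine goodIn_of_cycle_adj _ hcyc ?_
              intro z hz
              rw [Walk.support_cons, List.mem_cons] at hz
              rcases hz with rfl | hz
              · exact hHuu1
              · rw [Walk.support_reverse, List.mem_reverse, Walk.support_transfer] at hz
                exact hHur z hz
          · have hr1path : (r.takeUntil u1 hu1r).IsPath := hr.takeUntil hu1r
            by_cases he : s(u1, x) ∈ (r.takeUntil u1 hu1r).edges
            · exact (htri x hxS ((r.takeUntil u1 hu1r).adj_of_mem_edges he)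
                (hradj x r.start_mem_support) (hradj u1 hu1r)).elim
            · have hedges1 : ∀ e ∈ (r.takeUntil u1 hu1r).edges, e ∈ H.edgeSet :=
                fun e he' => hredgeH e (r.edges_takeUntil_subset hu1r he')
              have hr1Hpath : ((r.takeUntil u1 hu1r).transfer H hedges1).IsPath := by
                rw [Walk.isPath_def, Walk.support_transfer]
                exact hr1path.support_nodup
              have hH1 : H.Adj u1 x := hu1Hadj x hxS (fun h => hxu1 h.symm)
              have hcyc : (Walk.cons hH1 ((r.takeUntil u1 hu1r).transfer H hedges1)).IsCycle := by
                rw [Walk.cons_isCycle_iff]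
                refine ⟨hr1Hpath, ?_⟩
                rw [Walk.edges_transfer]
                exact he
              refine goodIn_of_cycle_adj _ hcyc ?_
              intro z hz
              rw [Walk.support_cons, List.mem_cons] at hz
              rcases hz with rfl | hz
              · exact hHuu1
              · rw [Walk.support_transfer] at hz
                exact hHur z (r.support_takeUntil_subset hu1r hz)
        · have hxu1 : x ≠ u1 := fun h => hu1r (h ▸ r.start_mem_support)
          have hyu1 : y ≠ u1 := fun h => hu1r (h ▸ r.end_mem_support)
          have hH1 : H.Adj u1 x := hu1Hadj x hxS hxu1
          have hH2 : H.Adj y u1 := (hu1Hadj y hyS hyu1).symm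
          have hp2path : ((r.transfer H hredgeH).concat hH2).IsPath := by
            rw [Walk.isPath_def, Walk.support_concat, Walk.support_transfer]
            refine List.Nodup.append hr.support_nodup (List.nodup_singleton u1) ?_
            intro w hw hw1
            rw [List.mem_singleton] at hw1
            exact hu1r (hw1 ▸ hw)
          have hcyc : (Walk.cons hH1 ((r.transfer H hredgeH).concat hH2)).IsCycle := by
            rw [Walk.cons_isCycle_iff]
            refine ⟨hp2path, ?_⟩
            rw [Walk.edges_concat, Walk.edges_transfer, List.concat_eq_append, List.mem_append]
            rintro (hin | hin)
            · exact hu1r (r.fst_mem_support_of_mem_edges hin)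
            · rw [List.mem_singleton, Sym2.eq_iff] at hin
              rcases hin with ⟨h1, h2⟩ | ⟨h1, h2⟩
              · exact hyu1 h1.symm
              · exact hxy h2
          refine goodIn_of_cycle_adj _ hcyc ?_
          intro z hz
          rw [Walk.support_cons, List.mem_cons] at hz
          rcases hz with rfl | hz
          · exact hHuu1
          · rw [Walk.support_concat, Walk.support_transfer,
              List.mem_append] at hz
            rcases hz with hz | hz
            · exact hHur z hz
            · rw [List.mem_singleton] at hz
              exact hz ▸ hHuu1
    · -- u outside K ∪ {v}
      have hNu : ∀ z, G.Adj u z → z ≠ v → z ∉ K :=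
        fun z hz hzv hzK => huK (hKcl z hzK u hz.symm huv)
      obtain ⟨W, hWs, hmd⟩ := goodIn_nbhd hloc u
      refine ⟨W, ?_, ?_⟩
      · intro x hx
        refine Or.inl ⟨hWs hx, ?_⟩
        rintro (⟨rfl, -⟩ | ⟨rfl, h2⟩)
        · exact huv rfl
        · exact huK (hSK h2)
      · refine hmd.transfer ?_
        intro x hx y hy hxy
        refine Or.inl ⟨hxy, ?_⟩
        rintro (⟨rfl, h2⟩ | ⟨rfl, h2⟩)
        · exact hNu y (hWs hy) (hSv y h2) (hSK h2)
        · exact hNu x (hWs hx) (hSv x h2) (hSK h2)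
  -- edge counting
  have hcount : H.edgeSet.ncard + S.ncard ≤ G.edgeSet.ncard + A.ncard + 1 := by
    set DelS : Set (Sym2 V) := (fun a => s(v, a)) '' S with hDelS
    set AddS : Set (Sym2 V) := (fun a => s(u1, a)) '' A ∪ {s(v, u1)} with hAddS
    have hsub : H.edgeSet ⊆ (G.edgeSet \ DelS) ∪ AddS := by
      intro e he
      induction e using Sym2.ind with
      | _ x y =>
        rw [SimpleGraph.mem_edgeSet] at he
        rcases he with ⟨hadj, hndel⟩ | hadd
        · left
          refine ⟨hadj, ?_⟩
          rintro ⟨a, haS, hae⟩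
          rw [Sym2.eq_iff] at hae
          rcases hae with ⟨h1, h2⟩ | ⟨h1, h2⟩
          · exact hndel (Or.inl ⟨h1.symm, h2 ▸ haS⟩)
          · exact hndel (Or.inr ⟨h1.symm, h2 ▸ haS⟩)
        · right
          rcases hadd with ⟨rfl, hy⟩ | ⟨rfl, hx⟩ | ⟨rfl, rfl⟩ | ⟨rfl, rfl⟩
          · exact Or.inl ⟨y, hy, rfl⟩
          · exact Or.inl ⟨x, hx, Sym2.eq_swap⟩
          · exact Or.inr rfl
          · exact Or.inr (Set.mem_singleton_iff.mpr Sym2.eq_swap)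
    have hDelSsub : DelS ⊆ G.edgeSet := by
      rintro e ⟨a, haS, rfl⟩
      exact hSadj a haS
    have hDelcard : DelS.ncard = S.ncard := by
      apply Set.ncard_image_of_injective
      intro a b hab
      exact Sym2.congr_right.mp hab
    have hAddcard : AddS.ncard ≤ A.ncard + 1 := by
      refine le_trans (Set.ncard_union_le _ _) ?_
      have h1 : ((fun a => s(u1, a)) '' A).ncard ≤ A.ncard := Set.ncard_image_le (Set.toFinite A)
      have h2 : ({s(v, u1)} : Set (Sym2 V)).ncard = 1 := Set.ncard_singleton _
      omega
    have h1 : H.edgeSet.ncard ≤ (G.edgeSet \ DelS).ncard + AddS.ncard :=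
      le_trans (Set.ncard_le_ncard hsub (Set.toFinite _)) (Set.ncard_union_le _ _)
    have h2 : (G.edgeSet \ DelS).ncard = G.edgeSet.ncard - DelS.ncard :=
      Set.ncard_diff hDelSsub (Set.toFinite _)
    have h3 : DelS.ncard ≤ G.edgeSet.ncard := Set.ncard_le_ncard hDelSsub (Set.toFinite _)
    omega
  exact ⟨H, hHconn, hlocH, hcount⟩

lemma transport [Fintype V] {n : ℕ} (hn : Fintype.card V = n) {H : SimpleGraph V}
    (hHc : H.Connected) (hHl : LocallyNonforesty H) :
    ∃ H' : SimpleGraph (Fin n), H'.Connected ∧ LocallyNonforesty H' ∧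
      H'.edgeSet.ncard = H.edgeSet.ncard := by
  classical
  set e : V ≃ Fin n := Fintype.equivFinOfCardEq hn with he
  set H' : SimpleGraph (Fin n) := SimpleGraph.comap (⇑e.symm) H with hH'
  have hAdj : ∀ x y : V, H'.Adj (e x) (e y) ↔ H.Adj x y := by
    intro x y
    show H.Adj (e.symm (e x)) (e.symm (e y)) ↔ H.Adj x y
    rw [Equiv.symm_apply_apply, Equiv.symm_apply_apply]
  have hconn' : H'.Connected := by
    exact hHc.map (⟨⇑e, fun {a b} h => (hAdj a b).mpr h⟩ : H →g H') e.surjective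
  have hloc' : LocallyNonforesty H' := by
    intro u
    apply not_acyclic_of_goodIn
    obtain ⟨W, hW, hmd⟩ := goodIn_nbhd hHl (e.symm u)
    refine ⟨⇑e '' W, ?_, ?_⟩
    · rintro z ⟨w, hw, rfl⟩
      have h1 : H.Adj (e.symm u) w := hW hw
      show H.Adj (e.symm u) (e.symm (e w))
      rwa [Equiv.symm_apply_apply]
    · refine ⟨hmd.1.image _, ?_⟩
      rintro z ⟨w, hw, rfl⟩
      obtain ⟨x, hx, y, hy, hxy, h1, h2⟩ := hmd.2 w hw
      exact ⟨e x, ⟨x, hx, rfl⟩, e y, ⟨y, hy, rfl⟩, fun hh => hxy (e.injective hh),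
        (hAdj w x).mpr h1, (hAdj w y).mpr h2⟩
  have himg : H'.edgeSet = Sym2.map ⇑e '' H.edgeSet := by
    ext ee
    induction ee using Sym2.ind with
    | _ a b =>
      simp only [SimpleGraph.mem_edgeSet, Set.mem_image]
      constructor
      · intro h
        exact ⟨s(e.symm a, e.symm b), h, by simp [Sym2.map_pair_eq]⟩
      · rintro ⟨ee', hee', heq⟩
        induction ee' using Sym2.ind with
        | _ x y =>
          rw [Sym2.map_pair_eq, Sym2.eq_iff] at heq
          rcases heq with ⟨rfl, rfl⟩ | ⟨rfl, rfl⟩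
          · show H.Adj (e.symm (e x)) (e.symm (e y))
            rw [Equiv.symm_apply_apply, Equiv.symm_apply_apply]
            exact hee'
          · show H.Adj (e.symm (e y)) (e.symm (e x))
            rw [Equiv.symm_apply_apply, Equiv.symm_apply_apply]
            exact hee'.symm
  refine ⟨H', hconn', hloc', ?_⟩
  rw [himg, Set.ncard_image_of_injective _ (Sym2.map.injective e.injective)]

theorem stmt_15' {V : Type*} [Fintype V] (G : SimpleGraph V) (n : ℕ)
    (hn : Fintype.card V = n) (h8 : 8 ≤ n)
    (hconn : G.Connected) (hloc : LocallyNonforesty G)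
    (hmin : ∀ H : SimpleGraph (Fin n), H.Connected → LocallyNonforesty H →
      G.edgeSet.ncard ≤ H.edgeSet.ncard) :
    ∀ B : Set V, IsBlock G B → 3 ≤ B.ncard → LocallyNonforesty (G.induce B) := by
  classical
  intro B hB h3 vB hacyc
  obtain ⟨v, hvB⟩ := vB
  have hCONTRA : ∀ T : Set V, (∀ x ∈ T, x ∈ B ∧ G.Adj v x) → MD2 G T → False := by
    intro T hT hmd
    obtain ⟨⟨t0, ht0⟩, h2⟩ := hmd
    have hmd2 : MD2 ((G.induce B).induce ((G.induce B).neighborSet ⟨v, hvB⟩))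
        {z | (z.1.1 : V) ∈ T} := by
      refine ⟨⟨⟨⟨t0, (hT t0 ht0).1⟩, (hT t0 ht0).2⟩, ht0⟩, ?_⟩
      rintro ⟨⟨uu, huB⟩, hunb⟩ hu
      obtain ⟨x, hx, y, hy, hxy, hux, huy⟩ := h2 uu hu
      refine ⟨⟨⟨x, (hT x hx).1⟩, (hT x hx).2⟩, hx, ⟨⟨y, (hT y hy).1⟩, (hT y hy).2⟩, hy, ?_,
        hux, huy⟩
      intro hh
      apply hxy
      exact congrArg (fun z => z.1.1) hh
    obtain ⟨a, cc, hcc⟩ := exists_cycle_of_md2 hmd2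
    exact hacyc cc hcc
  have hthird : ∀ a b : V, ∃ c ∈ B, c ≠ a ∧ c ≠ b := by
    intro a b
    have hsub : B ⊆ (B \ {a, b}) ∪ {a, b} := by
      intro z hz
      by_cases hzab : z ∈ ({a, b} : Set V)
      · exact Or.inr hzab
      · exact Or.inl ⟨hz, hzab⟩
    have hle : B.ncard ≤ (B \ {a, b}).ncard + ({a, b} : Set V).ncard :=
      le_trans (Set.ncard_le_ncard hsub (Set.toFinite _)) (Set.ncard_union_le _ _)
    have hab : ({a, b} : Set V).ncard ≤ 2 := by
      refine le_trans (Set.ncard_insert_le _ _) ?_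
      simp
    have hne : (B \ {a, b}).ncard ≠ 0 := by omega
    obtain ⟨c, hc⟩ := Set.nonempty_of_ncard_ne_zero hne
    have hc2 := hc.2
    simp only [Set.mem_insert_iff, Set.mem_singleton_iff, not_or] at hc2
    exact ⟨c, hc.1, hc2.1, hc2.2⟩
  obtain ⟨b₀, hb₀B, hb₀v, -⟩ := hthird v v
  set K : Set V := {x | ∃ p : G.Walk b₀ x, v ∉ p.support} with hK
  have hKv : v ∉ K := by
    rintro ⟨p, hp⟩
    exact hp p.end_mem_support
  have hKcl : ∀ x ∈ K, ∀ y, G.Adj x y → y ≠ v → y ∈ K := by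
    rintro x ⟨p, hp⟩ y hxy hyv
    refine ⟨p.concat hxy, ?_⟩
    rw [Walk.support_concat, List.mem_append]
    rintro (h | h)
    · exact hp h
    · rw [List.mem_singleton] at h
      exact hyv h.symm
  have hKconn : ∀ x ∈ K, ∀ y ∈ K, ∃ p : G.Walk x y, v ∉ p.support := by
    rintro x ⟨p1, hp1⟩ y ⟨p2, hp2⟩
    refine ⟨p1.reverse.append p2, ?_⟩
    intro h
    rcases (Walk.mem_support_append_iff _ _).mp h with h | h
    · rw [Walk.support_reverse, List.mem_reverse] at h
      exact hp1 h
    · exact hp2 h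
  have hBK : ∀ x, x ∈ B → x ≠ v → x ∈ K := by
    intro x hxB hxv
    have hr := hB.2.1 v hvB ⟨b₀, ⟨hb₀B, hb₀v⟩⟩ ⟨x, ⟨hxB, hxv⟩⟩
    obtain ⟨p, hp⟩ := exists_walk_of_induce_reachable hr
    exact ⟨p, fun hv' => (hp v hv').2 rfl⟩
  have hIngB : ∀ y, G.Adj v y → y ∈ K → y ∈ B := by
    rintro y hy ⟨p, hp⟩
    exact mem_block_of_walk_avoiding hB hvB hb₀B hb₀v hy p hp
  set S : Set V := {x | G.Adj v x ∧ x ∈ K} with hS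
  have hSB : ∀ x ∈ S, x ∈ B ∧ G.Adj v x := fun x hx => ⟨hIngB x hx.1 hx.2, hx.1⟩
  have hforest : ∀ T, T ⊆ S → MD2 G T → False :=
    fun T hT hmd => hCONTRA T (fun x hx => hSB x (hT hx)) hmd
  have hfirst : ∀ (s : Set V) (x y : ↥s), (G.induce s).Reachable x y → x.1 ≠ y.1 →
      ∃ z : ↥s, G.Adj x.1 z.1 := by
    intro s x y h hne
    obtain ⟨w⟩ := h
    cases w with
    | nil => exact absurd rfl hne
    | cons h' q => exact ⟨_, h'⟩
  obtain ⟨z1, hz1⟩ := hfirst B ⟨v, hvB⟩ ⟨b₀, hb₀B⟩ (hB.1.preconnected _ _) (Ne.symm hb₀v)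
  have hu1S : (z1 : V) ∈ S := ⟨hz1, hBK z1 z1.2 hz1.ne'⟩
  have hu1B : (z1 : V) ∈ B := (hSB z1 hu1S).1
  obtain ⟨b₁, hb₁B, hb₁v, hb₁u1⟩ := hthird v z1.1
  have hvu1 : v ≠ z1.1 := hz1.ne
  obtain ⟨z2, hz2⟩ := hfirst (B \ {z1.1}) ⟨v, ⟨hvB, hvu1⟩⟩ ⟨b₁, ⟨hb₁B, hb₁u1⟩⟩
    (hB.2.1 z1.1 hu1B _ _) (Ne.symm hb₁v)
  have hz2S : (z2 : V) ∈ S := ⟨hz2, hBK z2.1 z2.2.1 hz2.ne'⟩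
  have hz2u1 : (z2 : V) ≠ z1.1 := z2.2.2
  have hS2 : 2 ≤ S.ncard := by
    have hpair : ({z1.1, (z2 : V)} : Set V) ⊆ S := by
      intro w hw
      simp only [Set.mem_insert_iff, Set.mem_singleton_iff] at hw
      rcases hw with rfl | rfl
      exacts [hu1S, hz2S]
    calc (2 : ℕ) = ({z1.1, (z2 : V)} : Set V).ncard := (Set.ncard_pair (Ne.symm hz2u1)).symm
      _ ≤ S.ncard := Set.ncard_le_ncard hpair (Set.toFinite _)
  obtain ⟨a0, c0, hc0, hc0adj⟩ := exists_cycle_nbhd hloc v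
  have hc0K : ∀ z ∈ c0.support, z ∉ K := by
    intro z hz hzK
    refine hCONTRA {w | w ∈ c0.support ∧ w ∈ K} ?_ ?_
    · intro x hx
      exact ⟨hIngB x (hc0adj x hx.1) hx.2, hc0adj x hx.1⟩
    · refine ⟨⟨z, hz, hzK⟩, ?_⟩
      intro w hw
      obtain ⟨x, hx, y, hy, hxy, hwx, hwy⟩ := (cycle_md2 c0 hc0).2 w hw.1
      exact ⟨x, ⟨hx, hKcl w hw.2 x hwx (hc0adj x hx).ne'⟩,
        y, ⟨hy, hKcl w hw.2 y hwy (hc0adj y hy).ne'⟩, hxy, hwx, hwy⟩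
  have hvW : ∃ W : Set V, (∀ x ∈ W, G.Adj v x) ∧ (∀ x ∈ W, x ∉ K) ∧ MD2 G W :=
    ⟨{z | z ∈ c0.support}, fun z hz => hc0adj z hz, fun z hz => hc0K z hz, cycle_md2 c0 hc0⟩
  have hpairD : ∀ u ∈ S, ¬GoodIn G {x | G.Adj u x ∧ x ≠ v} →
      ∃ x y, x ∈ S ∧ y ∈ S ∧ x ≠ y ∧ G.Adj u x ∧ G.Adj u y := by
    intro u huS hbad
    obtain ⟨a1, c1, hc1, hc1adj⟩ := exists_cycle_nbhd hloc u
    by_cases hvc1 : v ∈ c1.support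
    · obtain ⟨x, hx, y, hy, hxy, hvx, hvy⟩ := (cycle_md2 c1 hc1).2 v hvc1
      exact ⟨x, y, ⟨hvx, hKcl u huS.2 x (hc1adj x hx) hvx.ne'⟩,
        ⟨hvy, hKcl u huS.2 y (hc1adj y hy) hvy.ne'⟩, hxy, hc1adj x hx, hc1adj y hy⟩
    · exact absurd ⟨{z | z ∈ c1.support},
        fun z hz => ⟨hc1adj z hz, fun hh => hvc1 (hh ▸ hz)⟩, cycle_md2 c1 hc1⟩ hbad
  by_cases hD : ∃ u ∈ S, ¬GoodIn G {x | G.Adj u x ∧ x ≠ v}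
  · by_cases hI : ∃ w, (w ∈ S ∧ GoodIn G {x | G.Adj w x ∧ x ≠ v}) ∧ ∃ s1 ∈ S, G.Adj w s1
    · obtain ⟨w, ⟨hwS, hwgood⟩, s1, hs1S, hws1⟩ := hI
      have hcov : ∀ u ∈ S, ¬GoodIn G {x | G.Adj u x ∧ x ≠ v} →
          ∀ s ∈ S, s ≠ w → (G.Adj w s ∨ s ∈ S \ ({w} ∪ {z | G.Adj w z})) := by
        intro u huS hbad s hsS hsu1
        by_cases hws : G.Adj w s
        · exact Or.inl hws
        · refine Or.inr ⟨hsS, ?_⟩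
          rintro (h | h)
          · exact hsu1 h
          · exact hws h
      obtain ⟨H, hHc, hHl, hHcard⟩ := surgery (A := S \ ({w} ∪ {z | G.Adj w z})) (u1 := w)
        hconn hloc hKv hKcl hKconn hS hwS (fun x hx => hx.1) (fun h => h.2 (Or.inl rfl))
        (fun a ha hadj => ha.2 (Or.inr hadj)) hwgood hcov hvW hforest
      have hAcard : (S \ ({w} ∪ {z | G.Adj w z})).ncard + 2 ≤ S.ncard := by
        have hsub2 : S \ ({w} ∪ {z | G.Adj w z}) ⊆ S \ {w, s1} := by
          intro x hx
          refine ⟨hx.1, ?_⟩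
          intro hmem
          simp only [Set.mem_insert_iff, Set.mem_singleton_iff] at hmem
          rcases hmem with rfl | rfl
          · exact hx.2 (Or.inl rfl)
          · exact hx.2 (Or.inr hws1)
        have hpairsub : ({w, s1} : Set V) ⊆ S := by
          intro x hx
          simp only [Set.mem_insert_iff, Set.mem_singleton_iff] at hx
          rcases hx with rfl | rfl
          exacts [hwS, hs1S]
        have hd : (S \ {w, s1}).ncard = S.ncard - 2 := by
          rw [Set.ncard_diff hpairsub (Set.toFinite _), Set.ncard_pair hws1.ne]
        have hle := Set.ncard_le_ncard hsub2 (Set.toFinite _)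
        omega
      obtain ⟨H', hH'c, hH'l, hH'card⟩ := transport hn hHc hHl
      have hm := hmin H' hH'c hH'l
      omega
    · obtain ⟨u0, hu0S, hu0bad⟩ := hD
      refine hforest {u | u ∈ S ∧ ¬GoodIn G {x | G.Adj u x ∧ x ≠ v}} (fun x hx => hx.1) ?_
      refine ⟨⟨u0, hu0S, hu0bad⟩, ?_⟩
      intro u hu
      obtain ⟨x, y, hxS, hyS, hxy, hux, huy⟩ := hpairD u hu.1 hu.2
      have hxbad : ¬GoodIn G {xx | G.Adj x xx ∧ xx ≠ v} := by
        intro hgood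
        exact hI ⟨x, ⟨hxS, hgood⟩, u, hu.1, hux.symm⟩
      have hybad : ¬GoodIn G {xx | G.Adj y xx ∧ xx ≠ v} := by
        intro hgood
        exact hI ⟨y, ⟨hyS, hgood⟩, u, hu.1, huy.symm⟩
      exact ⟨x, ⟨hxS, hxbad⟩, y, ⟨hyS, hybad⟩, hxy, hux, huy⟩
  · push_neg at hD
    have hcov : ∀ u ∈ S, ¬GoodIn G {x | G.Adj u x ∧ x ≠ v} →
        ∀ s ∈ S, s ≠ z1.1 → (G.Adj z1.1 s ∨ s ∈ (∅ : Set V)) := by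
      intro u huS hbad
      exact absurd (hD u huS) hbad
    obtain ⟨H, hHc, hHl, hHcard⟩ := surgery (A := (∅ : Set V)) (u1 := z1.1)
      hconn hloc hKv hKcl hKconn hS hu1S (Set.empty_subset _) (fun h => h)
      (fun a ha => absurd ha (fun hh => hh)) (hD z1.1 hu1S) hcov hvW hforest
    obtain ⟨H', hH'c, hH'l, hH'card⟩ := transport hn hHc hHl
    have hm := hmin H' hH'c hH'l
    have hA0 : (∅ : Set V).ncard = 0 := Set.ncard_empty _
    omega

end Stmt15

theorem stmt_15 {V : Type*} [Fintype V] (G : SimpleGraph V) (n : ℕ)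
    (hn : Fintype.card V = n) (h8 : 8 ≤ n)
    (hconn : G.Connected) (hloc : LocallyNonforesty G)
    -- `G` has minimum size among connected locally nonforesty graphs of order `n`
    (hmin : ∀ H : SimpleGraph (Fin n), H.Connected → LocallyNonforesty H →
      G.edgeSet.ncard ≤ H.edgeSet.ncard) :
    ∀ B : Set V, IsBlock G B → 3 ≤ B.ncard → LocallyNonforesty (G.induce B) := by
  exact Stmt15.stmt_15' G n hn h8 hconn hloc hmin
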